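/- arXiv:1403.0388 — 3 statements merged into one kernel-verified Lean document; each statement's English description precedes it below -/
import Mathlib

section
/- Let β ∈ (0,1) be a real number, let n ≥ 1 be a natural number, let t be a natural number, and let F : Fin t → ℝ satisfy 0 ≤ F i ≤ 1 for all i. Let m be a natural number. If n * ∏_{i} (1 - (1-β) * F i) ≥ β^m, then ∑_{i} F i ≤ (m * ln(1/β) + ln n) / (1 - β). -/
/-!
Since `1 - x ≤ exp (-x)`, the total weight `n * ∏ i, (1 - (1 - β) * F i)` is at most
`n * exp (-(1 - β) * ∑ i, F i)`. Comparing with the lower bound `β ^ m` and taking logarithms gives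
`m * log β ≤ log n - (1 - β) * ∑ i, F i`, which rearranges to the claim.
-/

open Finset Real

theorem Real.prod_one_sub_le_exp_neg_sum {ι : Type*} (s : Finset ι) {x : ι → ℝ}
    (hx : ∀ i ∈ s, x i ≤ 1) : ∏ i ∈ s, (1 - x i) ≤ exp (-∑ i ∈ s, x i) := by
  rw [← sum_neg_distrib, exp_sum]
  exact prod_le_prod (fun i hi ↦ sub_nonneg.2 (hx i hi)) fun i _ ↦ one_sub_le_exp_neg (x i)

theorem Real.le_log_sub_log_of_le_mul_exp_neg {a b c : ℝ} (hb : 0 < b)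
    (h : b ≤ c * exp (-a)) : a ≤ log c - log b := by
  have hc : 0 < c := pos_of_mul_pos_left (hb.trans_le h) (exp_pos _).le
  have hlog := log_le_log hb h
  rw [log_mul hc.ne' (exp_pos _).ne', log_exp] at hlog
  linarith

theorem rwm_mistake_bound_core_general
    (β : ℝ) (hβ0 : 0 < β) (hβ1 : β < 1)
    (n : ℕ)
    (t : ℕ) (F : Fin t → ℝ) (hF : ∀ i, 0 ≤ F i ∧ F i ≤ 1)
    (m : ℕ)
    (h : (n : ℝ) * ∏ i, (1 - (1 - β) * F i) ≥ β ^ m) :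
    ∑ i, F i ≤ ((m : ℝ) * Real.log (1 / β) + Real.log n) / (1 - β) := by
  have hβ' : 0 < 1 - β := sub_pos.2 hβ1
  have hweight : β ^ m ≤ n * exp (-((1 - β) * ∑ i, F i)) := by
    refine h.trans (mul_le_mul_of_nonneg_left ?_ n.cast_nonneg)
    rw [mul_sum]
    exact prod_one_sub_le_exp_neg_sum _ fun i _ ↦
      mul_le_one₀ (by linarith) (hF i).1 (hF i).2
  have hlog := le_log_sub_log_of_le_mul_exp_neg (pow_pos hβ0 m) hweight
  rw [log_pow] at hlog
  rw [one_div, log_inv, le_div_iff₀ hβ']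
  linarith

theorem rwm_mistake_bound_core
    (β : ℝ) (hβ0 : 0 < β) (hβ1 : β < 1)
    (n : ℕ) (hn : 1 ≤ n)
    (t : ℕ) (F : Fin t → ℝ) (hF : ∀ i, 0 ≤ F i ∧ F i ≤ 1)
    (m : ℕ)
    (h : (n : ℝ) * ∏ i, (1 - (1 - β) * F i) ≥ β ^ m) :
    ∑ i, F i ≤ ((m : ℝ) * Real.log (1 / β) + Real.log n) / (1 - β) :=
  rwm_mistake_bound_core_general β hβ0 hβ1 n t F hF m h
end

section
/- Let β ∈ (0,1) be a real number, n ≥ 1 and N natural numbers, x : Fin n → Fin N → Bool the experts' predictions, and c : Fin N → Bool the correct labels. For an expert i and a time t ≤ N, let mist i t denote the number of trials j < t with x i j ≠ c j, let w i t = β^(mist i t), and let W t = ∑_{i} w i t. For each trial t, let F t = (∑_{i : x i t ≠ c t} w i t) / W t be the fraction of the total weight placed on the wrong answer at trial t. Then for every t < N, W (t+1) = W t * (1 - (1-β) * F t). -/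
/-- Number of mistakes expert `i` made during the first `t` trials. -/
def mist {n N : ℕ} (x : Fin n → Fin N → Bool) (c : Fin N → Bool)
    (i : Fin n) (t : ℕ) : ℕ :=
  (Finset.univ.filter (fun j : Fin N => (j : ℕ) < t ∧ x i j ≠ c j)).card

/-- Weight of expert `i` just before trial `t`. -/
noncomputable def w (β : ℝ) {n N : ℕ} (x : Fin n → Fin N → Bool) (c : Fin N → Bool)
    (i : Fin n) (t : ℕ) : ℝ :=
  β ^ (mist x c i t)

/-- Total weight just before trial `t`. -/
noncomputable def W (β : ℝ) {n N : ℕ} (x : Fin n → Fin N → Bool) (c : Fin N → Bool)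
    (t : ℕ) : ℝ :=
  ∑ i : Fin n, w β x c i t

/-- Fraction of the total weight placed on the wrong answer at trial `t`. -/
noncomputable def F (β : ℝ) {n N : ℕ} (x : Fin n → Fin N → Bool) (c : Fin N → Bool)
    (t : Fin N) : ℝ :=
  (∑ i ∈ Finset.univ.filter (fun i : Fin n => x i t ≠ c t), w β x c i (t : ℕ)) /
    W β x c (t : ℕ)


lemma Finset.card_filter_lt_succ_and {N : ℕ} (p : Fin N → Prop) [DecidablePred p] (t : Fin N) :
    (Finset.univ.filter (fun j : Fin N => (j : ℕ) < t + 1 ∧ p j)).card =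
      (Finset.univ.filter (fun j : Fin N => (j : ℕ) < t ∧ p j)).card + if p t then 1 else 0 := by
  have hsplit : Finset.univ.filter (fun j : Fin N => (j : ℕ) < t + 1 ∧ p j) =
      Finset.univ.filter (fun j : Fin N => (j : ℕ) < t ∧ p j) ∪
        Finset.univ.filter (fun j : Fin N => j = t ∧ p j) := by
    ext j
    simp only [Finset.mem_union, Finset.mem_filter, Finset.mem_univ, true_and,
      Nat.lt_succ_iff_lt_or_eq, Fin.val_inj]
    tauto
  have hdisj : Disjoint (Finset.univ.filter (fun j : Fin N => (j : ℕ) < t ∧ p j))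
      (Finset.univ.filter (fun j : Fin N => j = t ∧ p j)) := by
    rw [Finset.disjoint_filter]
    rintro j - ⟨hj, -⟩ ⟨rfl, -⟩
    exact lt_irrefl _ hj
  rw [hsplit, Finset.card_union_of_disjoint hdisj]
  congr 1
  split_ifs with ht <;> simp [Finset.filter_and, Finset.filter_eq', ht]

lemma mist_succ {n N : ℕ} (x : Fin n → Fin N → Bool) (c : Fin N → Bool) (i : Fin n) (t : Fin N) :
    mist x c i (t + 1) = mist x c i t + if x i t ≠ c t then 1 else 0 :=
  Finset.card_filter_lt_succ_and _ t

lemma w_succ (β : ℝ) {n N : ℕ} (x : Fin n → Fin N → Bool) (c : Fin N → Bool) (i : Fin n)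
    (t : Fin N) : w β x c i (t + 1) = w β x c i t * if x i t ≠ c t then β else 1 := by
  rw [w, w, mist_succ, pow_add]
  split_ifs <;> simp

lemma w_nonneg {β : ℝ} (hβ : 0 ≤ β) {n N : ℕ} (x : Fin n → Fin N → Bool) (c : Fin N → Bool)
    (i : Fin n) (t : ℕ) : 0 ≤ w β x c i t :=
  pow_nonneg hβ _

lemma W_succ (β : ℝ) {n N : ℕ} (x : Fin n → Fin N → Bool) (c : Fin N → Bool) (t : Fin N) :
    W β x c (t + 1) = W β x c t -
      (1 - β) * ∑ i ∈ Finset.univ.filter (fun i : Fin n => x i t ≠ c t), w β x c i t := by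
  rw [W, W, Finset.sum_filter, Finset.mul_sum, ← Finset.sum_sub_distrib]
  refine Finset.sum_congr rfl fun i _ => ?_
  rw [w_succ]
  split_ifs <;> ring

lemma sub_mul_eq_mul_one_sub_mul_div {K : Type*} [Field K] {a s : K} (k : K)
    (h : a = 0 → s = 0) : a - k * s = a * (1 - k * (s / a)) := by
  rcases eq_or_ne a 0 with rfl | ha
  · simp [h rfl]
  · field_simp

theorem rwm_weight_recurrence_general
    (β : ℝ) (hβ0 : 0 < β)
    (n N : ℕ)
    (x : Fin n → Fin N → Bool) (c : Fin N → Bool)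
    (t : Fin N) :
    W β x c ((t : ℕ) + 1) = W β x c (t : ℕ) * (1 - (1 - β) * F β x c t) := by
  have hw := w_nonneg hβ0.le x c
  -- covers `W t = 0`, where `F t` is the junk value `0 / 0 = 0`
  have hwrong_eq_zero : W β x c t = 0 →
      ∑ i ∈ Finset.univ.filter (fun i : Fin n => x i t ≠ c t), w β x c i t = 0 := by
    intro hW
    rw [W, Finset.sum_eq_zero_iff_of_nonneg fun i _ => hw i t] at hW
    exact Finset.sum_eq_zero fun i _ => hW i (Finset.mem_univ i)
  rw [W_succ, F, sub_mul_eq_mul_one_sub_mul_div _ hwrong_eq_zero]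

theorem rwm_weight_recurrence
    (β : ℝ) (hβ0 : 0 < β) (hβ1 : β < 1)
    (n N : ℕ) (hn : 1 ≤ n)
    (x : Fin n → Fin N → Bool) (c : Fin N → Bool)
    (t : Fin N) :
    W β x c ((t : ℕ) + 1) = W β x c (t : ℕ) * (1 - (1 - β) * F β x c t) :=
  rwm_weight_recurrence_general β hβ0 n N x c t
end

section
/- Let β ∈ (0,1) be a real number, n ≥ 1 a natural number, and let X_{k1}, X_{p1}, X_2, X_3 and K_2, K_3 be nonnegative real numbers with X_{k1} < X_{p1}. For a real K_1 > 0, define Bound_CRWM(K_1) = ((K_1 X_{k1} + K_2 X_2 + K_3 X_3) * ln(1/β) + 3 * ln n) / (1-β) and Bound_RWM(K_1) = ((K_1 X_{p1} + K_2 X_2 + K_3 X_3) * ln(1/β) + ln n) / (1-β). Then for every K_1 > 2 * ln n / ((X_{p1} - X_{k1}) * ln(1/β)), one has Bound_CRWM(K_1) < Bound_RWM(K_1); in particular there exists K_0 ≥ 0 such that Bound_CRWM(K_1) < Bound_RWM(K_1) for all K_1 > K_0. -/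
/-!
Both bounds divide by the same positive number `1 - β`, so comparing them amounts to comparing
numerators. The cascade pays `2 ln n` more for the experts' weights, but saves
`K₁ (X_{p1} - X_{k1}) ln(1/β)` on the first region, a term growing linearly in `K₁`.
-/

open Real

/-- The randomized weighted majority mistake bound for `k` learners in cascade, each with `n`
experts, when the best experts together make `m` mistakes; plain RWM is `k = 1`. -/
noncomputable def cascadeMistakeBound (β : ℝ) (n : ℕ) (k m : ℝ) : ℝ :=
  (m * log (1 / β) + k * log n) / (1 - β)

section

variable {β : ℝ} {n : ℕ} {k k' m m' : ℝ}

theorem cascadeMistakeBound_lt_iff (hβ1 : β < 1) :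
    cascadeMistakeBound β n k m < cascadeMistakeBound β n k' m' ↔
      (k - k') * log n < (m' - m) * log (1 / β) := by
  rw [cascadeMistakeBound, cascadeMistakeBound, div_lt_div_iff_of_pos_right (by linarith)]
  constructor <;> intro h <;> linarith

theorem cascadeMistakeBound_lt_of_gt_div {x x' c K : ℝ} (hβ0 : 0 < β) (hβ1 : β < 1)
    (hx : x < x') (hK : K > (k - k') * log n / ((x' - x) * log (1 / β))) :
    cascadeMistakeBound β n k (K * x + c) < cascadeMistakeBound β n k' (K * x' + c) := by
  have hgap : 0 < (x' - x) * log (1 / β) :=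
    mul_pos (sub_pos.mpr hx) (log_pos (one_lt_one_div hβ0 hβ1))
  rw [cascadeMistakeBound_lt_iff hβ1]
  calc (k - k') * log n < K * ((x' - x) * log (1 / β)) := (div_lt_iff₀ hgap).mp hK
    _ = (K * x' + c - (K * x + c)) * log (1 / β) := by ring

end

theorem crwm_bound_eventually_better_general
    (β : ℝ) (hβ0 : 0 < β) (hβ1 : β < 1)
    (n : ℕ)
    (Xk1 Xp1 X₂ X₃ K₂ K₃ : ℝ)
    (hlt : Xk1 < Xp1) :
    (∀ K₁ : ℝ, K₁ > 2 * Real.log n / ((Xp1 - Xk1) * Real.log (1 / β)) →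
        ((K₁ * Xk1 + K₂ * X₂ + K₃ * X₃) * Real.log (1 / β) + 3 * Real.log n) / (1 - β) <
          ((K₁ * Xp1 + K₂ * X₂ + K₃ * X₃) * Real.log (1 / β) + Real.log n) / (1 - β)) ∧
      ∃ K₀ : ℝ, 0 ≤ K₀ ∧ ∀ K₁ : ℝ, K₁ > K₀ →
        ((K₁ * Xk1 + K₂ * X₂ + K₃ * X₃) * Real.log (1 / β) + 3 * Real.log n) / (1 - β) <
          ((K₁ * Xp1 + K₂ * X₂ + K₃ * X₃) * Real.log (1 / β) + Real.log n) / (1 - β) := by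
  have better : ∀ K₁ : ℝ, K₁ > 2 * Real.log n / ((Xp1 - Xk1) * Real.log (1 / β)) →
      ((K₁ * Xk1 + K₂ * X₂ + K₃ * X₃) * Real.log (1 / β) + 3 * Real.log n) / (1 - β) <
        ((K₁ * Xp1 + K₂ * X₂ + K₃ * X₃) * Real.log (1 / β) + Real.log n) / (1 - β) := by
    intro K₁ hK₁
    have h := cascadeMistakeBound_lt_of_gt_div (n := n) (k := 3) (k' := 1)
      (c := K₂ * X₂ + K₃ * X₃) hβ0 hβ1 hlt (by norm_num only; exact hK₁)
    simpa only [cascadeMistakeBound, one_mul, add_assoc] using h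
  have hgap : 0 ≤ (Xp1 - Xk1) * log (1 / β) :=
    mul_nonneg (sub_nonneg.mpr hlt.le) (log_pos (one_lt_one_div hβ0 hβ1)).le
  exact ⟨better, _, div_nonneg (mul_nonneg zero_le_two (log_natCast_nonneg n)) hgap, better⟩

theorem crwm_bound_eventually_better
    (β : ℝ) (hβ0 : 0 < β) (hβ1 : β < 1)
    (n : ℕ) (hn : 1 ≤ n)
    (Xk1 Xp1 X₂ X₃ K₂ K₃ : ℝ)
    (hXk1 : 0 ≤ Xk1) (hXp1 : 0 ≤ Xp1) (hX₂ : 0 ≤ X₂) (hX₃ : 0 ≤ X₃)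
    (hK₂ : 0 ≤ K₂) (hK₃ : 0 ≤ K₃)
    (hlt : Xk1 < Xp1) :
    (∀ K₁ : ℝ, K₁ > 2 * Real.log n / ((Xp1 - Xk1) * Real.log (1 / β)) →
        ((K₁ * Xk1 + K₂ * X₂ + K₃ * X₃) * Real.log (1 / β) + 3 * Real.log n) / (1 - β) <
          ((K₁ * Xp1 + K₂ * X₂ + K₃ * X₃) * Real.log (1 / β) + Real.log n) / (1 - β)) ∧
      ∃ K₀ : ℝ, 0 ≤ K₀ ∧ ∀ K₁ : ℝ, K₁ > K₀ →
        ((K₁ * Xk1 + K₂ * X₂ + K₃ * X₃) * Real.log (1 / β) + 3 * Real.log n) / (1 - β) <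
          ((K₁ * Xp1 + K₂ * X₂ + K₃ * X₃) * Real.log (1 / β) + Real.log n) / (1 - β) :=
  crwm_bound_eventually_better_general β hβ0 hβ1 n Xk1 Xp1 X₂ X₃ K₂ K₃ hlt
end
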